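/- arXiv:1010.4278 — 4 statements merged into one kernel-verified Lean document; each statement's English description precedes it below -/
import Mathlib

section
/- The Metropolis-adjusted step with proposal Φ and rejection by momentum flip preserves the equilibrium distribution μ: for every measurable set A ⊆ Ω, ∫_Ω [ a(x)·1_A(Φ(x)) + (1 − a(x))·1_A(R(x)) ] μ(dx) = μ(A). -/
open MeasureTheory

/-- The Gibbs (equilibrium) probability measure with density `Z⁻¹ e^{-βH}`
with respect to Lebesgue measure on phase space. -/
noncomputable def gibbs {ν : ℕ} (β : ℝ)
    (H : (Fin ν → ℝ) × (Fin ν → ℝ) → ℝ) :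
    Measure ((Fin ν → ℝ) × (Fin ν → ℝ)) :=
  volume.withDensity fun x =>
    ENNReal.ofReal ((∫ y, Real.exp (-β * H y))⁻¹ * Real.exp (-β * H x))

/-- The Metropolis acceptance probability `a(x) = min(1, e^{-β(H(Φx) - H(x))})`. -/
noncomputable def accept {ν : ℕ} (β : ℝ)
    (H : (Fin ν → ℝ) × (Fin ν → ℝ) → ℝ)
    (Φ : (Fin ν → ℝ) × (Fin ν → ℝ) → (Fin ν → ℝ) × (Fin ν → ℝ))
    (x : (Fin ν → ℝ) × (Fin ν → ℝ)) : ℝ :=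
  min 1 (Real.exp (-β * (H (Φ x) - H x)))

/-- The momentum-flip map `R(q,p) = (q,-p)`. -/
def momentumFlip {ν : ℕ} (x : (Fin ν → ℝ) × (Fin ν → ℝ)) :
    (Fin ν → ℝ) × (Fin ν → ℝ) :=
  (x.1, -x.2)

open Function

/-
With density `ρ` and `m := min ρ (ρ ∘ Φ)`, the Metropolis choice of `a` is exactly `ρ a = m`,
so the step integrates `g` against `ρ` as `∫ m (g ∘ Φ) + ∫ ρ (g ∘ R) - ∫ m (g ∘ R)`.
Reversibility makes `S = R ∘ Φ` a volume-preserving involution with `Φ ∘ S = R`, and `m ∘ S = m`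
because `ρ ∘ R = ρ`; substituting `S` turns the first integral into the third.
Substituting `R` turns the second into `∫ ρ g`.
-/

theorem MeasureTheory.MeasurePreserving.integral_comp_of_involutive {α E : Type*}
    [MeasurableSpace α] [NormedAddCommGroup E] [NormedSpace ℝ E] {μ : Measure α} {S : α → α}
    (hS : MeasurePreserving S μ μ) (hS_inv : Involutive S) (f : α → E) :
    ∫ x, f (S x) ∂μ = ∫ x, f x ∂μ :=
  hS.integral_comp (MeasurableEquiv.ofInvolutive S hS_inv hS.measurable).measurableEmbedding f

section Reversible

variable {α : Type*} {R Φ : α → α}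

theorem apply_apply_apply_of_reversible (hR : Involutive R) (hrev : Φ ∘ R ∘ Φ ∘ R = id)
    (x : α) : Φ (R (Φ x)) = R x := by
  simpa only [comp_apply, hR x, id] using congrFun hrev (R x)

theorem involutive_comp_of_reversible (hR : Involutive R) (hrev : Φ ∘ R ∘ Φ ∘ R = id) :
    Involutive (R ∘ Φ) := fun x => by
  simp only [comp_apply, apply_apply_apply_of_reversible hR hrev, hR x]

end Reversible

theorem integral_mul_metropolis_step_eq {α : Type*} [MeasurableSpace α] {μ : Measure α}
    {R Φ : α → α} (hR : MeasurePreserving R μ μ) (hR_inv : Involutive R)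
    (hΦ : MeasurePreserving Φ μ μ) (hrev : Φ ∘ R ∘ Φ ∘ R = id)
    {ρ a : α → ℝ} (hρ : Integrable ρ μ) (hρR : ∀ x, ρ (R x) = ρ x)
    (hacc : ∀ x, ρ x * a x = min (ρ x) (ρ (Φ x)))
    {g : α → ℝ} {C : ℝ} (hg : Measurable g) (hgC : ∀ x, ‖g x‖ ≤ C) :
    ∫ x, ρ x * (a x * g (Φ x) + (1 - a x) * g (R x)) ∂μ = ∫ x, ρ x * g x ∂μ := by
  set m : α → ℝ := fun x => min (ρ x) (ρ (Φ x))
  have hm : Integrable m μ := hρ.inf (hΦ.integrable_comp_of_integrable hρ)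
  have integrable_mul_comp : ∀ {f : α → ℝ} {T : α → α}, Integrable f μ → Measurable T →
      Integrable (fun x => f x * g (T x)) μ := fun {_ T} hf hT =>
    hf.mul_bdd (hg.comp hT).aestronglyMeasurable (ae_of_all _ fun x => hgC (T x))
  have hΦR := apply_apply_apply_of_reversible hR_inv hrev
  have hm_step : ∫ x, m x * g (Φ x) ∂μ = ∫ x, m x * g (R x) ∂μ := by
    have hmS : ∀ x, m (R (Φ x)) = m x := fun x => by
      simp only [m, hρR, hΦR, min_comm]
    rw [← (hR.comp hΦ).integral_comp_of_involutive (involutive_comp_of_reversible hR_inv hrev)]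
    simp only [comp_apply, hmS, hΦR]
  have hρ_flip : ∫ x, ρ x * g (R x) ∂μ = ∫ x, ρ x * g x ∂μ := by
    rw [← hR.integral_comp_of_involutive hR_inv (fun x => ρ x * g x)]
    simp only [hρR]
  calc ∫ x, ρ x * (a x * g (Φ x) + (1 - a x) * g (R x)) ∂μ
      = ∫ x, m x * g (Φ x) + (ρ x * g (R x) - m x * g (R x)) ∂μ := by
        congr 1 with x
        simp only [m, ← hacc]
        ring
    _ = ∫ x, ρ x * g x ∂μ := by
        have hρR_int := integrable_mul_comp hρ hR.measurable
        have hmR_int := integrable_mul_comp hm hR.measurable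
        rw [integral_add (integrable_mul_comp hm hΦ.measurable), integral_sub hρR_int hmR_int, hm_step, hρ_flip]
        · ring
        · exact hρR_int.sub hmR_int

section Gibbs

variable {ν : ℕ}

theorem momentumFlip_involutive : Involutive (momentumFlip (ν := ν)) := fun x => by
  simp [momentumFlip]

theorem measurePreserving_momentumFlip :
    MeasurePreserving (momentumFlip (ν := ν)) volume volume := by
  rw [Measure.volume_eq_prod]
  exact (MeasurePreserving.id _).prod (Measure.measurePreserving_neg _)

noncomputable def gibbsDensity (β : ℝ) (H : (Fin ν → ℝ) × (Fin ν → ℝ) → ℝ)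
    (x : (Fin ν → ℝ) × (Fin ν → ℝ)) : ℝ :=
  (∫ y, Real.exp (-β * H y))⁻¹ * Real.exp (-β * H x)

variable {β : ℝ} {H : (Fin ν → ℝ) × (Fin ν → ℝ) → ℝ}

theorem gibbsDensity_nonneg (x : (Fin ν → ℝ) × (Fin ν → ℝ)) : 0 ≤ gibbsDensity β H x :=
  mul_nonneg (inv_nonneg.2 (integral_nonneg fun _ => (Real.exp_pos _).le)) (Real.exp_pos _).le

theorem integrable_gibbsDensity (hH : Integrable (fun x => Real.exp (-β * H x)) volume) :
    Integrable (gibbsDensity β H) volume :=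
  hH.const_mul _

theorem gibbsDensity_momentumFlip (hHR : ∀ x, H (momentumFlip x) = H x)
    (x : (Fin ν → ℝ) × (Fin ν → ℝ)) : gibbsDensity β H (momentumFlip x) = gibbsDensity β H x := by
  rw [gibbsDensity, hHR, gibbsDensity]

theorem integral_gibbs (hH : Measurable H) (g : (Fin ν → ℝ) × (Fin ν → ℝ) → ℝ) :
    ∫ x, g x ∂gibbs β H = ∫ x, gibbsDensity β H x * g x := by
  have hρ : Measurable (gibbsDensity β H) := measurable_const.mul (hH.const_mul (-β)).exp
  change ∫ x, g x ∂volume.withDensity (fun x => ENNReal.ofReal (gibbsDensity β H x)) = _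
  rw [integral_withDensity_eq_integral_toReal_smul hρ.ennreal_ofReal
    (ae_of_all _ fun _ => ENNReal.ofReal_lt_top)]
  simp only [ENNReal.toReal_ofReal (gibbsDensity_nonneg _), smul_eq_mul]

theorem gibbsDensity_mul_accept (Φ : (Fin ν → ℝ) × (Fin ν → ℝ) → (Fin ν → ℝ) × (Fin ν → ℝ))
    (x : (Fin ν → ℝ) × (Fin ν → ℝ)) :
    gibbsDensity β H x * accept β H Φ x = min (gibbsDensity β H x) (gibbsDensity β H (Φ x)) := by
  rw [accept, mul_min_of_nonneg _ _ (gibbsDensity_nonneg x), mul_one, gibbsDensity, gibbsDensity,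
    mul_assoc, ← Real.exp_add]
  ring_nf

end Gibbs

theorem metropolis_step_preserves_gibbs_general
    (ν : ℕ) (β : ℝ)
    (H : (Fin ν → ℝ) × (Fin ν → ℝ) → ℝ) (hHmeas : Measurable H)
    (hHint : Integrable (fun x => Real.exp (-β * H x)) volume)
    (hHR : ∀ x, H (momentumFlip x) = H x)
    (Φ : (Fin ν → ℝ) × (Fin ν → ℝ) → (Fin ν → ℝ) × (Fin ν → ℝ))
    (hΦmeas : Measurable Φ)
    (hΦvol : Measure.map Φ volume = volume)
    (hΦrev : Φ ∘ momentumFlip ∘ Φ ∘ momentumFlip = id) :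
    ∀ A : Set ((Fin ν → ℝ) × (Fin ν → ℝ)), MeasurableSet A →
      ∫ x, (accept β H Φ x * A.indicator 1 (Φ x)
          + (1 - accept β H Φ x) * A.indicator 1 (momentumFlip x))
        ∂(gibbs β H) = ((gibbs β H) A).toReal := by
  intro A hA
  rw [integral_gibbs hHmeas, ← measureReal_def, ← integral_indicator_one hA, integral_gibbs hHmeas]
  exact integral_mul_metropolis_step_eq measurePreserving_momentumFlip momentumFlip_involutive
    ⟨hΦmeas, hΦvol⟩ hΦrev (integrable_gibbsDensity hHint) (gibbsDensity_momentumFlip hHR)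
    (gibbsDensity_mul_accept Φ) (measurable_const.indicator hA)
    (C := 1) (fun x => (norm_indicator_le_norm_self 1 x).trans_eq norm_one)

/-- The Metropolis-adjusted step with proposal `Φ` and rejection by momentum flip
preserves the equilibrium distribution `μ`. -/
theorem metropolis_step_preserves_gibbs
    (ν : ℕ) (β : ℝ) (hβ : 0 < β)
    (H : (Fin ν → ℝ) × (Fin ν → ℝ) → ℝ) (hHmeas : Measurable H)
    (hHint : Integrable (fun x => Real.exp (-β * H x)) volume)
    (hHR : ∀ x, H (momentumFlip x) = H x)
    (Φ : (Fin ν → ℝ) × (Fin ν → ℝ) → (Fin ν → ℝ) × (Fin ν → ℝ))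
    (hΦmeas : Measurable Φ)
    (hΦvol : Measure.map Φ volume = volume)
    (hΦrev : Φ ∘ momentumFlip ∘ Φ ∘ momentumFlip = id) :
    ∀ A : Set ((Fin ν → ℝ) × (Fin ν → ℝ)), MeasurableSet A →
      ∫ x, (accept β H Φ x * A.indicator 1 (Φ x)
          + (1 - accept β H Φ x) * A.indicator 1 (momentumFlip x))
        ∂(gibbs β H) = ((gibbs β H) A).toReal :=
  metropolis_step_preserves_gibbs_general ν β H hHmeas hHint hHR Φ hΦmeas hΦvol hΦrev
end

section
/- The Metropolis-adjusted step with proposal Φ satisfies the skew detailed balance identity: for every bounded measurable function F : Ω × Ω → ℝ, ∫_Ω F(x, Φ(x)) a(x) μ(dx) = ∫_Ω F(R(Φ(x)), R(x)) a(x) μ(dx). -/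
open MeasureTheory

/-- Skew detailed balance: for every bounded measurable `F`,
`∫ F(x, Φ(x)) a(x) μ(dx) = ∫ F(R(Φ(x)), R(x)) a(x) μ(dx)`. -/
theorem metropolis_skew_detailed_balance
    (ν : ℕ) (β : ℝ) (hβ : 0 < β)
    (H : (Fin ν → ℝ) × (Fin ν → ℝ) → ℝ) (hHmeas : Measurable H)
    (hHint : Integrable (fun x => Real.exp (-β * H x)) volume)
    (hHR : ∀ x, H (momentumFlip x) = H x)
    (Φ : (Fin ν → ℝ) × (Fin ν → ℝ) → (Fin ν → ℝ) × (Fin ν → ℝ))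
    (hΦmeas : Measurable Φ)
    (hΦvol : Measure.map Φ volume = volume)
    (hΦrev : Φ ∘ momentumFlip ∘ Φ ∘ momentumFlip = id)
    (F : ((Fin ν → ℝ) × (Fin ν → ℝ)) × ((Fin ν → ℝ) × (Fin ν → ℝ)) → ℝ)
    (hFmeas : Measurable F) (C : ℝ) (hFbdd : ∀ y, |F y| ≤ C) :
    ∫ x, F (x, Φ x) * accept β H Φ x ∂(gibbs β H)
      = ∫ x, F (momentumFlip (Φ x), momentumFlip x) * accept β H Φ x
          ∂(gibbs β H) := by
  classical
  set Z := ∫ y, Real.exp (-β * H y) with hZdef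
  have hZnn : 0 ≤ Z := integral_nonneg fun y => (Real.exp_pos _).le
  set d : (Fin ν → ℝ) × (Fin ν → ℝ) → ℝ :=
    fun x => Z⁻¹ * Real.exp (-β * H x) with hddef
  have hdnn : ∀ x, 0 ≤ d x := fun x =>
    mul_nonneg (inv_nonneg.mpr hZnn) (Real.exp_pos _).le
  have hdmeas : Measurable d := by
    rw [hddef]; fun_prop
  -- facts about the momentum flip R
  have hRmeas : Measurable (momentumFlip (ν := ν)) :=
    measurable_fst.prodMk measurable_snd.neg
  have hRR : ∀ x : (Fin ν → ℝ) × (Fin ν → ℝ), momentumFlip (momentumFlip x) = x := by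
    intro x; simp [momentumFlip]
  have hΦR : ∀ x, Φ (momentumFlip (Φ x)) = momentumFlip x := by
    intro x
    have h := congrFun hΦrev (momentumFlip x)
    simpa [Function.comp, hRR] using h
  have hRvol : MeasurePreserving (momentumFlip (ν := ν)) volume volume := by
    have h1 : MeasurePreserving (Neg.neg : (Fin ν → ℝ) → (Fin ν → ℝ)) volume volume :=
      ⟨measurable_neg, Measure.map_neg_eq_self volume⟩
    have h2 := (MeasurePreserving.id (volume : Measure (Fin ν → ℝ))).prod h1
    rw [← Measure.volume_eq_prod] at h2
    exact h2
  -- the involution T = R ∘ Φ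
  set T : (Fin ν → ℝ) × (Fin ν → ℝ) → (Fin ν → ℝ) × (Fin ν → ℝ) :=
    fun x => momentumFlip (Φ x) with hTdef
  have hTT : ∀ x, T (T x) = x := by
    intro x
    show momentumFlip (Φ (momentumFlip (Φ x))) = x
    rw [hΦR, hRR]
  have hTmeas : Measurable T := hRmeas.comp hΦmeas
  have hTvol : MeasurePreserving T volume volume :=
    hRvol.comp ⟨hΦmeas, hΦvol⟩
  let e : ((Fin ν → ℝ) × (Fin ν → ℝ)) ≃ᵐ ((Fin ν → ℝ) × (Fin ν → ℝ)) :=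
    ⟨⟨T, T, hTT, hTT⟩, hTmeas, hTmeas⟩
  have hemap : Measure.map (⇑e) volume = volume := hTvol.map_eq
  -- rewrite gibbs integrals as weighted Lebesgue integrals
  have hgibbs : gibbs β H
      = volume.withDensity fun x => ((Real.toNNReal (d x) : NNReal) : ENNReal) := rfl
  rw [hgibbs,
    integral_withDensity_eq_integral_smul hdmeas.real_toNNReal,
    integral_withDensity_eq_integral_smul hdmeas.real_toNNReal]
  simp_rw [NNReal.smul_def, Real.coe_toNNReal _ (hdnn _)]
  -- the exponential-min identity
  have hexpmin : ∀ u v : ℝ, Real.exp u * min 1 (Real.exp (v - u))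
      = min (Real.exp u) (Real.exp v) := by
    intro u v
    rw [mul_min_of_nonneg _ _ (Real.exp_nonneg u), mul_one, ← Real.exp_add]
    ring_nf
  have hweight : ∀ x, d x * accept β H Φ x
      = Z⁻¹ * min (Real.exp (-β * H x)) (Real.exp (-β * H (Φ x))) := by
    intro x
    have harg : -β * (H (Φ x) - H x) = (-β * H (Φ x)) - (-β * H x) := by ring
    rw [hddef, accept, harg, mul_assoc, hexpmin]
  -- change of variables x ↦ T x
  calc ∫ x, d x * (F (x, Φ x) * accept β H Φ x)
      = ∫ x, d (e x) * (F (e x, Φ (e x)) * accept β H Φ (e x)) := by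
        rw [← MeasureTheory.integral_map_equiv e
          (fun x => d x * (F (x, Φ x) * accept β H Φ x)), hemap]
    _ = ∫ x, d x * (F (momentumFlip (Φ x), momentumFlip x) * accept β H Φ x) := by
        congr 1; funext x
        have heTx : e x = momentumFlip (Φ x) := rfl
        have hΦe : Φ (e x) = momentumFlip x := by rw [heTx, hΦR]
        rw [heTx] at *
        rw [hΦe]
        -- rearrange to isolate the invariant weight
        have lhs : d (momentumFlip (Φ x)) * (F (momentumFlip (Φ x), momentumFlip x)
              * accept β H Φ (momentumFlip (Φ x)))
            = F (momentumFlip (Φ x), momentumFlip x)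
              * (d (momentumFlip (Φ x)) * accept β H Φ (momentumFlip (Φ x))) := by ring
        have rhs : d x * (F (momentumFlip (Φ x), momentumFlip x) * accept β H Φ x)
            = F (momentumFlip (Φ x), momentumFlip x) * (d x * accept β H Φ x) := by ring
        rw [lhs, rhs]
        congr 1
        rw [hweight, hweight]
        have h1 : H (momentumFlip (Φ x)) = H (Φ x) := hHR _
        have h2 : H (Φ (momentumFlip (Φ x))) = H x := by rw [hΦR]; exact hHR _
        rw [h1, h2, min_comm]
end

section
/- The one-step energy error of the Verlet map is of order h³: for every radius ρ > 0 there exists a constant C > 0 (depending on ν, M, K and ρ) such that for all h ∈ (0,1] and all (q,p) ∈ ℝ^ν × ℝ^ν with ‖p‖ ≤ ρ, |H(Φ_h(q,p)) − H(q,p)| ≤ C h³, where H(q,p) = ½ pᵀM⁻¹p + U(q). -/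
open MeasureTheory Matrix

/-- The gradient of `U : ℝ^ν → ℝ` in the standard basis. -/
noncomputable def grad {ν : ℕ} (U : (Fin ν → ℝ) → ℝ) (q : Fin ν → ℝ) : Fin ν → ℝ :=
  fun i => fderiv ℝ U q (Pi.single i 1)

/-- One step of the Verlet integrator with stepsize `h`, mass matrix `M` and
potential `U`. -/
noncomputable def verlet {ν : ℕ} (h : ℝ) (M : Matrix (Fin ν) (Fin ν) ℝ)
    (U : (Fin ν → ℝ) → ℝ) (x : (Fin ν → ℝ) × (Fin ν → ℝ)) :
    (Fin ν → ℝ) × (Fin ν → ℝ) :=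
  let phalf := x.2 - (h / 2) • grad U x.1
  let q₁ := x.1 + h • (M⁻¹).mulVec phalf
  (q₁, phalf - (h / 2) • grad U q₁)

/-- The Hamiltonian `H(q,p) = ½ pᵀM⁻¹p + U(q)`. -/
noncomputable def hamiltonian {ν : ℕ} (M : Matrix (Fin ν) (Fin ν) ℝ)
    (U : (Fin ν → ℝ) → ℝ) (x : (Fin ν → ℝ) × (Fin ν → ℝ)) : ℝ :=
  (1 / 2) * (x.2 ⬝ᵥ (M⁻¹).mulVec x.2) + U x.1

/-!
Write `δ = q₁ - q` and `g₀, g₁` for `∇U` at `q` and `q₁`. Expanding the kinetic energy of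
`p₁ = p - (h/2)(g₀ + g₁)` with the symmetry of `M⁻¹`, and using `δ = h M⁻¹ p_{1/2}`, gives
`H(Φ_h(q,p)) - H(q,p) = [U(q₁) - U(q) - ½ (g₀ + g₁)·δ] + (h²/8) (g₁ - g₀)ᵀ M⁻¹ (g₁ + g₀)`.
The bracket is the remainder of the trapezoidal rule, of size `(K/2) ‖δ‖³` because `D²U` is
`K`-Lipschitz, and the second term is `O(h² ‖δ‖)` because `∇U` is `K`-Lipschitz.
Finally `‖δ‖ = O(h)` as long as `‖p‖ ≤ ρ`.
-/

open scoped NNReal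

section Calculus

variable {E F : Type*} [NormedAddCommGroup E] [NormedSpace ℝ E]
  [NormedAddCommGroup F] [NormedSpace ℝ F]

theorem norm_fderiv_eq_norm_iteratedFDeriv_one (f : E → F) (x : E) :
    ‖fderiv ℝ f x‖ = ‖iteratedFDeriv ℝ 1 f x‖ := by
  simp

theorem lipschitzWith_fderiv_of_norm_iteratedFDeriv_two_le {f : E → F} {C : ℝ≥0}
    (hf : ContDiff ℝ 2 f) (hC : ∀ x, ‖iteratedFDeriv ℝ 2 f x‖ ≤ C) :
    LipschitzWith C (fderiv ℝ f) :=
  lipschitzWith_of_nnnorm_fderiv_le ((hf.fderiv_right le_rfl).differentiable one_ne_zero)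
    fun x => by
      rw [← NNReal.coe_le_coe, coe_nnnorm, norm_fderiv_eq_norm_iteratedFDeriv_one,
        norm_iteratedFDeriv_fderiv]
      exact hC x

theorem lipschitzWith_fderiv_fderiv_of_norm_iteratedFDeriv_three_le {f : E → F} {C : ℝ≥0}
    (hf : ContDiff ℝ 3 f) (hC : ∀ x, ‖iteratedFDeriv ℝ 3 f x‖ ≤ C) :
    LipschitzWith C (fderiv ℝ (fderiv ℝ f)) :=
  lipschitzWith_fderiv_of_norm_iteratedFDeriv_two_le (hf.fderiv_right le_rfl)
    fun x => by rw [norm_iteratedFDeriv_fderiv]; exact hC x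

theorem norm_sub_sub_fderiv_apply_le {f : E → F} {C : ℝ≥0} (hf : Differentiable ℝ f)
    (hlip : LipschitzWith C (fderiv ℝ f)) (x y : E) :
    ‖f y - f x - fderiv ℝ f x (y - x)‖ ≤ C * ‖y - x‖ ^ 2 := by
  have hbound (z : E) (hz : z ∈ segment ℝ x y) :
      ‖fderiv ℝ f z - fderiv ℝ f x‖ ≤ C * ‖y - x‖ :=
    calc ‖fderiv ℝ f z - fderiv ℝ f x‖ ≤ C * ‖z - x‖ := hlip.norm_sub_le z x
      _ ≤ C * ‖y - x‖ := by gcongr; exact norm_sub_le_of_mem_segment hz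
  calc ‖f y - f x - fderiv ℝ f x (y - x)‖ ≤ C * ‖y - x‖ * ‖y - x‖ :=
        (convex_segment x y).norm_image_sub_le_of_norm_fderiv_le' (fun z _ => hf z) hbound
          (left_mem_segment ℝ x y) (right_mem_segment ℝ x y)
    _ = C * ‖y - x‖ ^ 2 := by ring

theorem norm_trapezoid_remainder_le {f : E → F} {C : ℝ≥0} (hf : ContDiff ℝ 2 f)
    (hlip : LipschitzWith C (fderiv ℝ (fderiv ℝ f))) (x y : E) :
    ‖f y - f x - (2⁻¹ : ℝ) • (fderiv ℝ f x (y - x) + fderiv ℝ f y (y - x))‖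
      ≤ C / 2 * ‖y - x‖ ^ 3 := by
  have hf₁ : Differentiable ℝ f := hf.differentiable two_ne_zero
  have hf₂ : Differentiable ℝ (fderiv ℝ f) :=
    (hf.fderiv_right (m := 1) one_add_one_eq_two.le).differentiable one_ne_zero
  -- By the symmetry of `f''`, `G' z = ½ (f' z - f' x - f'' z (z - x))`, which is `O(‖z - x‖²)`.
  set G : E → F := fun z => f z - (2⁻¹ : ℝ) • (fderiv ℝ f x (z - x) + fderiv ℝ f z (z - x))
  have hG (z : E) : HasFDerivAt G
      ((2⁻¹ : ℝ) • (fderiv ℝ f z - fderiv ℝ f x - fderiv ℝ (fderiv ℝ f) z (z - x))) z := by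
    have hsub : HasFDerivAt (fun w : E => w - x) (ContinuousLinearMap.id ℝ E) z :=
      (hasFDerivAt_id z).sub_const x
    have hlin := (fderiv ℝ f x).hasFDerivAt.comp z hsub
    have hprod := (hf₂ z).hasFDerivAt.clm_apply hsub
    refine ((hf₁ z).hasFDerivAt.sub ((hlin.add hprod).const_smul (2⁻¹ : ℝ))).congr_fderiv ?_
    ext v
    have hsymm := hf.contDiffAt.isSymmSndFDerivAt (x := z) (by simp) v (z - x)
    simp only [ContinuousLinearMap.comp_id, _root_.sub_apply, _root_.add_apply, _root_.smul_apply,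
      ContinuousLinearMap.flip_apply, hsymm]
    module
  have hbound (z : E) (hz : z ∈ segment ℝ x y) :
      ‖(2⁻¹ : ℝ) • (fderiv ℝ f z - fderiv ℝ f x - fderiv ℝ (fderiv ℝ f) z (z - x))‖
        ≤ C / 2 * ‖y - x‖ ^ 2 := by
    have htaylor := norm_sub_sub_fderiv_apply_le hf₂ hlip z x
    rw [← norm_neg, show -(fderiv ℝ f x - fderiv ℝ f z - fderiv ℝ (fderiv ℝ f) z (x - z))
      = fderiv ℝ f z - fderiv ℝ f x - fderiv ℝ (fderiv ℝ f) z (z - x) by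
        rw [← neg_sub z x, map_neg]; abel] at htaylor
    rw [norm_smul, norm_inv, Real.norm_two]
    calc 2⁻¹ * ‖fderiv ℝ f z - fderiv ℝ f x - fderiv ℝ (fderiv ℝ f) z (z - x)‖
        ≤ 2⁻¹ * (C * ‖x - z‖ ^ 2) := by gcongr
      _ ≤ C / 2 * ‖y - x‖ ^ 2 := by
          rw [← mul_assoc, inv_mul_eq_div, ← norm_neg, neg_sub]
          gcongr
          exact norm_sub_le_of_mem_segment hz
  calc _ = ‖G y - G x‖ := by
        rw [show G x = f x by simp [G]]; congr 1; simp only [G]; abel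
    _ ≤ C / 2 * ‖y - x‖ ^ 2 * ‖y - x‖ :=
        (convex_segment x y).norm_image_sub_le_of_norm_hasFDerivWithin_le
          (fun z _ => (hG z).hasFDerivWithinAt) hbound (left_mem_segment ℝ x y)
          (right_mem_segment ℝ x y)
    _ = C / 2 * ‖y - x‖ ^ 3 := by ring

end Calculus

section Gradient

variable {ν : ℕ}

theorem fderiv_apply_eq_dotProduct_grad (f : (Fin ν → ℝ) → ℝ) (x v : Fin ν → ℝ) :
    fderiv ℝ f x v = v ⬝ᵥ grad f x := by
  have hv : v = ∑ i, v i • Pi.single i (1 : ℝ) := by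
    simp [← Pi.single_smul, Finset.univ_sum_single]
  conv_lhs => rw [hv]
  simp [grad, dotProduct]

theorem norm_apply_single_le {ι : Type*} [Fintype ι] [DecidableEq ι] (L : (ι → ℝ) →L[ℝ] ℝ) :
    ‖fun i => L (Pi.single i 1)‖ ≤ ‖L‖ :=
  (pi_norm_le_iff_of_nonneg (norm_nonneg L)).2 fun i =>
    (L.le_opNorm _).trans (by rw [Pi.norm_single, norm_one, mul_one])

theorem norm_grad_le (f : (Fin ν → ℝ) → ℝ) (x : Fin ν → ℝ) : ‖grad f x‖ ≤ ‖fderiv ℝ f x‖ :=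
  norm_apply_single_le _

theorem norm_grad_sub_grad_le (f : (Fin ν → ℝ) → ℝ) (x y : Fin ν → ℝ) :
    ‖grad f x - grad f y‖ ≤ ‖fderiv ℝ f x - fderiv ℝ f y‖ := by
  convert norm_apply_single_le (fderiv ℝ f x - fderiv ℝ f y) using 2
  ext i
  simp [grad]

end Gradient

theorem abs_dotProduct_le {ι : Type*} [Fintype ι] (v w : ι → ℝ) :
    |v ⬝ᵥ w| ≤ Fintype.card ι * ‖v‖ * ‖w‖ :=
  calc |v ⬝ᵥ w| ≤ ∑ i, |v i| * |w i| := by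
        simpa only [dotProduct, abs_mul] using
          Finset.abs_sum_le_sum_abs (fun i => v i * w i) Finset.univ
    _ ≤ ∑ _i : ι, ‖v‖ * ‖w‖ := by
        gcongr with i
        · exact norm_le_pi_norm v i
        · exact norm_le_pi_norm w i
    _ = Fintype.card ι * ‖v‖ * ‖w‖ := by simp [mul_assoc]

theorem Matrix.IsSymm.dotProduct_mulVec_comm {ι R : Type*} [Fintype ι] [CommSemiring R]
    {A : Matrix ι ι R} (hA : A.IsSymm) (v w : ι → R) : v ⬝ᵥ A *ᵥ w = w ⬝ᵥ A *ᵥ v := by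
  rw [dotProduct_mulVec, ← mulVec_transpose, hA.eq, dotProduct_comm]

theorem Matrix.exists_norm_mulVec_le {ι : Type*} [Fintype ι] (A : Matrix ι ι ℝ) :
    ∃ a, 0 < a ∧ ∀ v, ‖A *ᵥ v‖ ≤ a * ‖v‖ :=
  (LinearMap.toContinuousLinearMap (mulVecLin A)).bound

section Verlet

variable {ν : ℕ} {M : Matrix (Fin ν) (Fin ν) ℝ} {U : (Fin ν → ℝ) → ℝ} {h : ℝ}

theorem verlet_fst_sub (q p : Fin ν → ℝ) :
    (verlet h M U (q, p)).1 - q = h • M⁻¹ *ᵥ (p - (h / 2) • grad U q) := by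
  simp [verlet]

theorem hamiltonian_verlet_sub (hM : M⁻¹.IsSymm) (q p : Fin ν → ℝ) :
    let q₁ := (verlet h M U (q, p)).1
    hamiltonian M U (verlet h M U (q, p)) - hamiltonian M U (q, p) =
      U q₁ - U q - 2⁻¹ * (fderiv ℝ U q (q₁ - q) + fderiv ℝ U q₁ (q₁ - q))
        + h ^ 2 / 8 * ((grad U q₁ - grad U q) ⬝ᵥ M⁻¹ *ᵥ (grad U q₁ + grad U q)) := by
  intro q₁
  have hp₁ : (verlet h M U (q, p)).2 = p - (h / 2) • grad U q - (h / 2) • grad U q₁ := rfl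
  rw [fderiv_apply_eq_dotProduct_grad, fderiv_apply_eq_dotProduct_grad, verlet_fst_sub]
  generalize grad U q = g₀, grad U q₁ = g₁ at hp₁ ⊢
  simp only [hamiltonian, hp₁, mulVec_sub, mulVec_add, mulVec_smul, dotProduct_sub, sub_dotProduct,
    dotProduct_add, dotProduct_smul, smul_dotProduct, smul_eq_mul]
  rw [dotProduct_comm (M⁻¹ *ᵥ p), dotProduct_comm (M⁻¹ *ᵥ p), dotProduct_comm (M⁻¹ *ᵥ g₀),
    dotProduct_comm (M⁻¹ *ᵥ g₀), hM.dotProduct_mulVec_comm g₀ p, hM.dotProduct_mulVec_comm g₁ p,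
    hM.dotProduct_mulVec_comm g₁ g₀]
  ring

theorem norm_verlet_fst_sub_le {a K : ℝ} (ha : 0 ≤ a) (hA : ∀ v, ‖M⁻¹ *ᵥ v‖ ≤ a * ‖v‖)
    (hh : 0 ≤ h) (q p : Fin ν → ℝ) (hg : ‖grad U q‖ ≤ K) :
    ‖(verlet h M U (q, p)).1 - q‖ ≤ h * (a * (‖p‖ + h / 2 * K)) := by
  rw [verlet_fst_sub, norm_smul, Real.norm_of_nonneg hh]
  gcongr
  refine (hA _).trans ?_
  gcongr
  refine (norm_sub_le _ _).trans ?_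
  rw [norm_smul, Real.norm_of_nonneg (by positivity)]
  gcongr

theorem abs_grad_sub_dotProduct_mulVec_grad_add_le {a : ℝ} {K : ℝ≥0} (ha : 0 ≤ a)
    (hA : ∀ v, ‖M⁻¹ *ᵥ v‖ ≤ a * ‖v‖) (hgrad : ∀ x, ‖grad U x‖ ≤ K)
    (hlip : LipschitzWith K (fderiv ℝ U)) (x y : Fin ν → ℝ) :
    |(grad U y - grad U x) ⬝ᵥ M⁻¹ *ᵥ (grad U y + grad U x)|
      ≤ ν * (K * ‖y - x‖) * (a * (2 * K)) := by
  refine (abs_dotProduct_le _ _).trans ?_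
  rw [Fintype.card_fin]
  gcongr
  · exact (norm_grad_sub_grad_le U y x).trans (hlip.norm_sub_le y x)
  · refine (hA _).trans ?_
    gcongr
    exact (norm_add_le _ _).trans (by linarith [hgrad y, hgrad x])

end Verlet

/-- The one-step energy error of the Verlet map is of order `h³`. -/
theorem verlet_energy_error_cubic
    (ν : ℕ) (M : Matrix (Fin ν) (Fin ν) ℝ) (hM : M.PosDef)
    (U : (Fin ν → ℝ) → ℝ) (hU : ContDiff ℝ 3 U)
    (K : ℝ) (hK : 0 < K)
    (hD1 : ∀ q, ‖iteratedFDeriv ℝ 1 U q‖ ≤ K)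
    (hD2 : ∀ q, ‖iteratedFDeriv ℝ 2 U q‖ ≤ K)
    (hD3 : ∀ q, ‖iteratedFDeriv ℝ 3 U q‖ ≤ K) :
    ∀ ρ : ℝ, 0 < ρ → ∃ C : ℝ, 0 < C ∧
      ∀ h ∈ Set.Ioc (0 : ℝ) 1, ∀ q p : Fin ν → ℝ, ‖p‖ ≤ ρ →
        |hamiltonian M U (verlet h M U (q, p)) - hamiltonian M U (q, p)|
          ≤ C * h ^ 3 := by
  intro ρ hρ
  lift K to ℝ≥0 using hK.le
  have hsymm : M⁻¹.IsSymm := (isHermitian_iff_isSymm.1 hM.isHermitian).inv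
  obtain ⟨a, ha, hA⟩ := (M⁻¹).exists_norm_mulVec_le
  have hgrad (x) : ‖grad U x‖ ≤ K :=
    (norm_grad_le U x).trans ((norm_fderiv_eq_norm_iteratedFDeriv_one U x).trans_le (hD1 x))
  set D := a * (ρ + K)
  refine ⟨K / 2 * D ^ 3 + ν * K ^ 2 * a * D / 4, by positivity, ?_⟩
  rintro h ⟨hh₀, hh₁⟩ q p hp
  set q₁ := (verlet h M U (q, p)).1
  have hδ : ‖q₁ - q‖ ≤ h * D := by
    refine (norm_verlet_fst_sub_le ha.le hA hh₀.le q p (hgrad q)).trans ?_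
    dsimp only [D]
    gcongr
    nlinarith [K.coe_nonneg]
  have htrap := norm_trapezoid_remainder_le (hU.of_le (by norm_num))
    (lipschitzWith_fderiv_fderiv_of_norm_iteratedFDeriv_three_le hU hD3) q q₁
  rw [Real.norm_eq_abs, smul_eq_mul] at htrap
  have hkin := abs_grad_sub_dotProduct_mulVec_grad_add_le ha.le hA hgrad
    (lipschitzWith_fderiv_of_norm_iteratedFDeriv_two_le (hU.of_le (by norm_num)) hD2) q q₁
  rw [hamiltonian_verlet_sub hsymm]
  calc _ ≤ |U q₁ - U q - 2⁻¹ * (fderiv ℝ U q (q₁ - q) + fderiv ℝ U q₁ (q₁ - q))|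
        + h ^ 2 / 8 * |(grad U q₁ - grad U q) ⬝ᵥ M⁻¹ *ᵥ (grad U q₁ + grad U q)| := by
        refine (abs_add_le _ _).trans_eq ?_
        rw [abs_mul, abs_of_nonneg (by positivity : (0 : ℝ) ≤ h ^ 2 / 8)]
    _ ≤ K / 2 * (h * D) ^ 3 + h ^ 2 / 8 * (ν * (K * (h * D)) * (a * (2 * K))) := by
        gcongr
        · exact htrap.trans (by gcongr)
        · exact hkin.trans (by gcongr)
    _ = (K / 2 * D ^ 3 + ν * K ^ 2 * a * D / 4) * h ^ 3 := by ring
end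

section
/- The Verlet map is second-order accurate for Hamilton's equations: for every radius ρ > 0 there exists a constant C > 0 (depending on ν, M, K and ρ) such that for all h ∈ (0,1], all (q,p) ∈ ℝ^ν × ℝ^ν with ‖q‖ + ‖p‖ ≤ ρ, and every continuously differentiable curve (Q,P) : [0,h] → ℝ^ν × ℝ^ν satisfying Q' = M⁻¹P, P' = −∇U(Q), Q(0) = q, P(0) = p, one has ‖Φ_h(q,p) − (Q(h), P(h))‖ ≤ C h³. -/
open MeasureTheory Matrix

/-! In the form `q₁ = q + h M⁻¹p - (h²/2) M⁻¹∇U(q)`, `p₁ = p - (h/2)(∇U(q) + ∇U(q₁))`, the Verlet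
position update is the second-order Taylor polynomial of `Q` at `0`, and the momentum update is the
trapezoidal rule for `P(h) - p = -∫₀ʰ ∇U(Q)` with `Q(h)` replaced by `q₁`. Along the flow,
`‖P‖ ≤ ρ + K`, so `Q'' = -M⁻¹∇U(Q)` and `(∇U ∘ Q)' = D²U(Q) M⁻¹P` are Lipschitz in `t` (this uses
the bounds on `D²U` and `D³U`); hence both quadrature errors are `O(h³)`, while replacing `Q(h)` by
`q₁` costs `(h/2) K ‖Q(h) - q₁‖ = O(h⁴)`. Each estimate is a mean value inequality. -/

open Set

variable {E : Type*} [NormedAddCommGroup E] [NormedSpace ℝ E]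

theorem norm_sub_sub_smul_le {f f' : ℝ → E} {v : E} {T L : ℝ}
    (hf : ∀ t ∈ Icc 0 T, HasDerivAt f (f' t) t) (hf' : ∀ t ∈ Icc 0 T, ‖f' t - v‖ ≤ L) :
    ∀ t ∈ Icc 0 T, ‖f t - f 0 - t • v‖ ≤ L * t := by
  have hderiv : ∀ t ∈ Icc 0 T,
      HasDerivWithinAt (fun s => f s - s • v) (f' t - v) (Icc 0 T) t := fun t ht =>
    ((hf t ht).sub (((hasDerivAt_id t).smul_const v).congr_deriv (one_smul ℝ v))).hasDerivWithinAt
  intro t ht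
  simpa [sub_right_comm] using norm_image_sub_le_of_norm_deriv_le_segment' hderiv
    (fun s hs => hf' s (Ico_subset_Icc_self hs)) t ht

theorem norm_sub_le_of_hasDerivAt {f f' : ℝ → E} {T L : ℝ}
    (hf : ∀ t ∈ Icc 0 T, HasDerivAt f (f' t) t) (hf' : ∀ t ∈ Icc 0 T, ‖f' t‖ ≤ L) :
    ∀ t ∈ Icc 0 T, ‖f t - f 0‖ ≤ L * t := by
  simpa using norm_sub_sub_smul_le (v := 0) hf (by simpa using hf')

theorem norm_sub_taylor_two_le {Q V W : ℝ → E} {T L : ℝ} (hT : 0 ≤ T)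
    (hQ : ∀ t ∈ Icc 0 T, HasDerivAt Q (V t) t) (hV : ∀ t ∈ Icc 0 T, HasDerivAt V (W t) t)
    (hW : ∀ t ∈ Icc 0 T, ‖W t - W 0‖ ≤ L) :
    ‖Q T - Q 0 - T • V 0 - (T ^ 2 / 2) • W 0‖ ≤ L * T ^ 2 := by
  have hL : 0 ≤ L := by simpa using hW 0 ⟨le_rfl, hT⟩
  have hV_lin : ∀ t ∈ Icc 0 T, ‖V t - t • W 0 - V 0‖ ≤ L * T := fun t ht => by
    rw [sub_right_comm]
    exact (norm_sub_sub_smul_le hV hW t ht).trans (mul_le_mul_of_nonneg_left ht.2 hL)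
  have hderiv : ∀ t ∈ Icc 0 T,
      HasDerivAt (fun s => Q s - (s ^ 2 / 2) • W 0) (V t - t • W 0) t := fun t ht =>
    (hQ t ht).sub ((((hasDerivAt_pow 2 t).div_const 2).smul_const (W 0)).congr_deriv
      (by ring_nf))
  calc ‖Q T - Q 0 - T • V 0 - (T ^ 2 / 2) • W 0‖
      = ‖Q T - (T ^ 2 / 2) • W 0 - (Q 0 - ((0 : ℝ) ^ 2 / 2) • W 0) - T • V 0‖ := by
        congr 1; module
    _ ≤ L * T * T := norm_sub_sub_smul_le hderiv hV_lin T ⟨hT, le_rfl⟩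
    _ = L * T ^ 2 := by ring

theorem norm_sub_trapezoid_le {F f f' : ℝ → E} {T L : ℝ} (hT : 0 ≤ T)
    (hF : ∀ t ∈ Icc 0 T, HasDerivAt F (f t) t) (hf : ∀ t ∈ Icc 0 T, HasDerivAt f (f' t) t)
    (hf' : ∀ t ∈ Icc 0 T, ‖f' t - f' 0‖ ≤ L) :
    ‖F T - F 0 - (T / 2) • (f 0 + f T)‖ ≤ L * T ^ 2 := by
  have hL : 0 ≤ L := by simpa using hf' 0 ⟨le_rfl, hT⟩
  have hf_lin : ∀ t ∈ Icc 0 T, ‖f t - f 0 - t • f' t‖ ≤ 2 * L * t := fun t ht =>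
    have hsub : Icc 0 t ⊆ Icc 0 T := Icc_subset_Icc le_rfl ht.2
    norm_sub_sub_smul_le (fun s hs => hf s (hsub hs)) (fun s hs => by
      calc ‖f' s - f' t‖ ≤ ‖f' s - f' 0‖ + ‖f' t - f' 0‖ := by
            rw [norm_sub_rev (f' t)]; exact norm_sub_le_norm_sub_add_norm_sub _ _ _
        _ ≤ 2 * L := by linarith [hf' s (hsub hs), hf' t ht]) t ⟨ht.1, le_rfl⟩
  have hderiv : ∀ t ∈ Icc 0 T, HasDerivAt (fun s => F s - (s / 2) • (f 0 + f s))
      ((1 / 2 : ℝ) • (f t - f 0 - t • f' t)) t := fun t ht =>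
    ((hF t ht).sub (((hasDerivAt_id t).div_const 2).smul ((hf t ht).const_add (f 0)))).congr_deriv
      (by simp only [id]; module)
  have hbound : ∀ t ∈ Icc 0 T, ‖(1 / 2 : ℝ) • (f t - f 0 - t • f' t)‖ ≤ L * T := fun t ht => by
    rw [norm_smul, Real.norm_of_nonneg (by norm_num)]
    nlinarith [hf_lin t ht, ht.2]
  calc ‖F T - F 0 - (T / 2) • (f 0 + f T)‖
      = ‖F T - (T / 2) • (f 0 + f T) - (F 0 - ((0 : ℝ) / 2) • (f 0 + f 0))‖ := by
        congr 1; module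
    _ ≤ L * T * T := norm_sub_le_of_hasDerivAt hderiv hbound T ⟨hT, le_rfl⟩
    _ = L * T ^ 2 := by ring

theorem norm_sub_le_of_hasFDerivAt {F : Type*} [NormedAddCommGroup F] [NormedSpace ℝ F]
    {f : E → F} {f' : E → E →L[ℝ] F} {C : ℝ} (hf : ∀ x, HasFDerivAt f (f' x) x)
    (hf' : ∀ x, ‖f' x‖ ≤ C) (x y : E) : ‖f x - f y‖ ≤ C * ‖x - y‖ :=
  convex_univ.norm_image_sub_le_of_norm_hasFDerivWithin_le (fun z _ => (hf z).hasFDerivWithinAt)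
    (fun z _ => hf' z) (mem_univ y) (mem_univ x)

noncomputable def verletStep (A : E →L[ℝ] E) (g : E → E) (h : ℝ) (x : E × E) : E × E :=
  let p' := x.2 - (h / 2) • g x.1
  let q₁ := x.1 + h • A p'
  (q₁, p' - (h / 2) • g q₁)

section HamiltonFlow

variable {A : E →L[ℝ] E} {g : E → E} {Dg : E → E →L[ℝ] E} {Q P : ℝ → E} {K B h : ℝ}

theorem norm_flow_position_sub_le (hQ : ∀ t ∈ Icc 0 h, HasDerivAt Q (A (P t)) t)
    (hPB : ∀ t ∈ Icc 0 h, ‖P t‖ ≤ B) : ∀ t ∈ Icc 0 h, ‖Q t - Q 0‖ ≤ ‖A‖ * B * t :=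
  norm_sub_le_of_hasDerivAt hQ fun t ht =>
    (A.le_opNorm _).trans (mul_le_mul_of_nonneg_left (hPB t ht) (norm_nonneg A))

theorem norm_flow_momentum_sub_le (hg : ∀ x, ‖g x‖ ≤ K)
    (hP : ∀ t ∈ Icc 0 h, HasDerivAt P (-g (Q t)) t) : ∀ t ∈ Icc 0 h, ‖P t - P 0‖ ≤ K * t :=
  norm_sub_le_of_hasDerivAt hP fun _ _ => (norm_neg _).trans_le (hg _)

theorem norm_verletStep_fst_sub_le (hK : 0 ≤ K) (hh : 0 ≤ h)
    (hg : ∀ x y, ‖g x - g y‖ ≤ K * ‖x - y‖)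
    (hQ : ∀ t ∈ Icc 0 h, HasDerivAt Q (A (P t)) t) (hP : ∀ t ∈ Icc 0 h, HasDerivAt P (-g (Q t)) t)
    (hPB : ∀ t ∈ Icc 0 h, ‖P t‖ ≤ B) :
    ‖(verletStep A g h (Q 0, P 0)).1 - Q h‖ ≤ K * ‖A‖ ^ 2 * B * h ^ 3 := by
  have hB : 0 ≤ B := (norm_nonneg _).trans (hPB 0 ⟨le_rfl, hh⟩)
  have hAP : ∀ t ∈ Icc 0 h, HasDerivAt (fun s => A (P s)) (-A (g (Q t))) t := fun t ht =>
    (A.hasFDerivAt.comp_hasDerivAt t (hP t ht)).congr_deriv (map_neg A _)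
  have hW : ∀ t ∈ Icc 0 h, ‖-A (g (Q t)) - -A (g (Q 0))‖ ≤ K * ‖A‖ ^ 2 * B * h := fun t ht =>
    calc ‖-A (g (Q t)) - -A (g (Q 0))‖ ≤ ‖A‖ * (K * ‖Q t - Q 0‖) := by
          rw [neg_sub_neg, ← map_sub, norm_sub_rev (Q t)]
          exact A.le_of_opNorm_le_of_le le_rfl (hg _ _)
      _ ≤ ‖A‖ * (K * (‖A‖ * B * h)) := by
          gcongr
          exact (norm_flow_position_sub_le hQ hPB t ht).trans
            (mul_le_mul_of_nonneg_left ht.2 (by positivity))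
      _ = K * ‖A‖ ^ 2 * B * h := by ring
  calc ‖(verletStep A g h (Q 0, P 0)).1 - Q h‖
      = ‖Q h - Q 0 - h • A (P 0) - (h ^ 2 / 2) • -A (g (Q 0))‖ := by
        rw [← norm_neg]; congr 1; simp only [verletStep, map_sub, map_smul]; module
    _ ≤ K * ‖A‖ ^ 2 * B * h * h ^ 2 := norm_sub_taylor_two_le hh hQ hAP hW
    _ = K * ‖A‖ ^ 2 * B * h ^ 3 := by ring

theorem norm_verletStep_snd_sub_le (hK : 0 ≤ K) (hh₀ : 0 ≤ h) (hh₂ : h ≤ 2)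
    (hg_bd : ∀ x, ‖g x‖ ≤ K) (hg : ∀ x y, ‖g x - g y‖ ≤ K * ‖x - y‖)
    (hDg : ∀ x, HasFDerivAt g (Dg x) x) (hDg_bd : ∀ x, ‖Dg x‖ ≤ K)
    (hDg_lip : ∀ x y, ‖Dg x - Dg y‖ ≤ K * ‖x - y‖)
    (hQ : ∀ t ∈ Icc 0 h, HasDerivAt Q (A (P t)) t) (hP : ∀ t ∈ Icc 0 h, HasDerivAt P (-g (Q t)) t)
    (hPB : ∀ t ∈ Icc 0 h, ‖P t‖ ≤ B) :
    ‖(verletStep A g h (Q 0, P 0)).2 - P h‖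
      ≤ (K * ‖A‖ ^ 2 * B ^ 2 + K ^ 2 * ‖A‖ + K ^ 2 * ‖A‖ ^ 2 * B) * h ^ 3 := by
  have hB : 0 ≤ B := (norm_nonneg _).trans (hPB 0 ⟨le_rfl, hh₀⟩)
  have hgQ : ∀ t ∈ Icc 0 h, HasDerivAt (fun s => -g (Q s)) (-Dg (Q t) (A (P t))) t :=
    fun t ht => ((hDg (Q t)).comp_hasDerivAt t (hQ t ht)).neg
  have hgQ' : ∀ t ∈ Icc 0 h, ‖-Dg (Q t) (A (P t)) - -Dg (Q 0) (A (P 0))‖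
      ≤ (K * ‖A‖ ^ 2 * B ^ 2 + K ^ 2 * ‖A‖) * h := fun t ht => by
    have hQt := (norm_flow_position_sub_le hQ hPB t ht).trans
      (mul_le_mul_of_nonneg_left ht.2 (by positivity))
    have hPt := (norm_flow_momentum_sub_le hg_bd hP t ht).trans (mul_le_mul_of_nonneg_left ht.2 hK)
    calc ‖-Dg (Q t) (A (P t)) - -Dg (Q 0) (A (P 0))‖
        = ‖(Dg (Q t) - Dg (Q 0)) (A (P t)) + Dg (Q 0) (A (P t - P 0))‖ := by
          rw [neg_sub_neg, norm_sub_rev, map_sub, map_sub, _root_.sub_apply, sub_add_sub_cancel]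
      _ ≤ K * ‖Q t - Q 0‖ * (‖A‖ * ‖P t‖) + K * (‖A‖ * ‖P t - P 0‖) :=
          (norm_add_le _ _).trans (add_le_add
            (ContinuousLinearMap.le_of_opNorm_le_of_le _ (hDg_lip _ _) (A.le_opNorm _))
            (ContinuousLinearMap.le_of_opNorm_le_of_le _ (hDg_bd _) (A.le_opNorm _)))
      _ ≤ K * (‖A‖ * B * h) * (‖A‖ * B) + K * (‖A‖ * (K * h)) := by
          gcongr
          exact hPB t ht
      _ = (K * ‖A‖ ^ 2 * B ^ 2 + K ^ 2 * ‖A‖) * h := by ring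
  have h_trap := norm_sub_trapezoid_le hh₀ hP hgQ hgQ'
  have h_pos := norm_verletStep_fst_sub_le hK hh₀ hg hQ hP hPB
  set q₁ := (verletStep A g h (Q 0, P 0)).1
  calc ‖(verletStep A g h (Q 0, P 0)).2 - P h‖
      = ‖-(P h - P 0 - (h / 2) • (-g (Q 0) + -g (Q h))) + (h / 2) • (g (Q h) - g q₁)‖ := by
        congr 1; simp only [verletStep, q₁]; module
    _ ≤ (K * ‖A‖ ^ 2 * B ^ 2 + K ^ 2 * ‖A‖) * h * h ^ 2
          + h / 2 * (K * (K * ‖A‖ ^ 2 * B * h ^ 3)) := by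
        refine (norm_add_le _ _).trans (add_le_add (by rwa [norm_neg]) ?_)
        rw [norm_smul, Real.norm_of_nonneg (by positivity)]
        gcongr
        exact (hg _ _).trans (by rw [norm_sub_rev]; gcongr)
    _ ≤ (K * ‖A‖ ^ 2 * B ^ 2 + K ^ 2 * ‖A‖ + K ^ 2 * ‖A‖ ^ 2 * B) * h ^ 3 := by
        have : 0 ≤ K ^ 2 * ‖A‖ ^ 2 * B * h ^ 3 := by positivity
        nlinarith

end HamiltonFlow

section Potential

variable {ν : ℕ} {U : (Fin ν → ℝ) → ℝ}

-- `grad U q` is definitionally `covectorCoords ν (fderiv ℝ U q)`.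
noncomputable def covectorCoords (ν : ℕ) : ((Fin ν → ℝ) →L[ℝ] ℝ) →L[ℝ] (Fin ν → ℝ) :=
  ContinuousLinearMap.pi fun i => ContinuousLinearMap.apply ℝ ℝ (Pi.single i 1)

theorem norm_covectorCoords_le : ‖covectorCoords ν‖ ≤ 1 :=
  ContinuousLinearMap.opNorm_le_bound _ zero_le_one fun L =>
    (pi_norm_le_iff_of_nonneg (by positivity)).2 fun i => by
      simpa [covectorCoords, Pi.norm_single] using L.le_opNorm (Pi.single i 1)

noncomputable def hessian (U : (Fin ν → ℝ) → ℝ) (q : Fin ν → ℝ) :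
    (Fin ν → ℝ) →L[ℝ] (Fin ν → ℝ) :=
  (covectorCoords ν).comp (fderiv ℝ (fderiv ℝ U) q)

theorem hasFDerivAt_grad (hU : Differentiable ℝ (fderiv ℝ U)) (q : Fin ν → ℝ) :
    HasFDerivAt (grad U) (hessian U q) q :=
  (covectorCoords ν).hasFDerivAt.comp q (hU q).hasFDerivAt

theorem norm_grad_le_s9 (q : Fin ν → ℝ) : ‖grad U q‖ ≤ ‖iteratedFDeriv ℝ 1 U q‖ := by
  rw [norm_iteratedFDeriv_one]
  exact (covectorCoords ν).le_of_opNorm_le norm_covectorCoords_le _ |>.trans_eq (one_mul _)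

theorem norm_hessian_le (q : Fin ν → ℝ) : ‖hessian U q‖ ≤ ‖iteratedFDeriv ℝ 2 U q‖ := by
  rw [← norm_iteratedFDeriv_fderiv, norm_iteratedFDeriv_one]
  exact ((covectorCoords ν).opNorm_comp_le _).trans
    (mul_le_of_le_one_left (norm_nonneg _) norm_covectorCoords_le)

theorem norm_hessian_sub_le (hU : ContDiff ℝ 3 U) {K : ℝ}
    (hD3 : ∀ q, ‖iteratedFDeriv ℝ 3 U q‖ ≤ K) (x y : Fin ν → ℝ) :
    ‖hessian U x - hessian U y‖ ≤ K * ‖x - y‖ := by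
  have hD2 : Differentiable ℝ (fderiv ℝ (fderiv ℝ U)) :=
    ((hU.fderiv_right (m := 2) (by norm_num)).fderiv_right (m := 1) (by norm_num)).differentiable
      one_ne_zero
  rw [hessian, hessian, ← ContinuousLinearMap.comp_sub]
  refine ((covectorCoords ν).opNorm_comp_le _).trans
    (mul_le_of_le_one_left (norm_nonneg _) norm_covectorCoords_le |>.trans ?_)
  refine norm_sub_le_of_hasFDerivAt (f := fderiv ℝ (fderiv ℝ U)) (fun z => (hD2 z).hasFDerivAt)
    (fun z => ?_) x y
  have := hD3 z
  rwa [← norm_iteratedFDeriv_fderiv, ← norm_iteratedFDeriv_fderiv, norm_iteratedFDeriv_one] at this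

end Potential

theorem verlet_eq_verletStep {ν : ℕ} (h : ℝ) (M : Matrix (Fin ν) (Fin ν) ℝ)
    (U : (Fin ν → ℝ) → ℝ) :
    verlet h M U = verletStep (Matrix.toLin' M⁻¹).toContinuousLinearMap (grad U) h :=
  rfl

theorem verlet_second_order_accurate_general
    (ν : ℕ) (M : Matrix (Fin ν) (Fin ν) ℝ)
    (U : (Fin ν → ℝ) → ℝ) (hU : ContDiff ℝ 3 U)
    (K : ℝ)
    (hD1 : ∀ q, ‖iteratedFDeriv ℝ 1 U q‖ ≤ K)
    (hD2 : ∀ q, ‖iteratedFDeriv ℝ 2 U q‖ ≤ K)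
    (hD3 : ∀ q, ‖iteratedFDeriv ℝ 3 U q‖ ≤ K) :
    ∀ ρ : ℝ, 0 < ρ → ∃ C : ℝ, 0 < C ∧
      ∀ h ∈ Set.Ioc (0 : ℝ) 1, ∀ q p : Fin ν → ℝ, ‖q‖ + ‖p‖ ≤ ρ →
        ∀ Q P : ℝ → (Fin ν → ℝ),
          (∀ t ∈ Set.Icc (0 : ℝ) h, HasDerivAt Q ((M⁻¹).mulVec (P t)) t) →
          (∀ t ∈ Set.Icc (0 : ℝ) h, HasDerivAt P (-(grad U (Q t))) t) →
          Q 0 = q → P 0 = p →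
          ‖verlet h M U (q, p) - (Q h, P h)‖ ≤ C * h ^ 3 := by
  intro ρ hρ
  have hK : 0 ≤ K := (norm_nonneg _).trans (hD1 0)
  have hg_bd : ∀ q, ‖grad U q‖ ≤ K := fun q => (norm_grad_le_s9 q).trans (hD1 q)
  have hH_bd : ∀ q, ‖hessian U q‖ ≤ K := fun q => (norm_hessian_le q).trans (hD2 q)
  have hH := hasFDerivAt_grad ((hU.fderiv_right (m := 2) (by norm_num)).differentiable two_ne_zero)
  have hg_lip := norm_sub_le_of_hasFDerivAt hH hH_bd
  set A := (Matrix.toLin' M⁻¹).toContinuousLinearMap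
  set B := ρ + K
  have hC₁ : 0 ≤ K * ‖A‖ ^ 2 * B := by positivity
  have hC₂ : 0 ≤ K * ‖A‖ ^ 2 * B ^ 2 + K ^ 2 * ‖A‖ + K ^ 2 * ‖A‖ ^ 2 * B := by positivity
  refine ⟨K * ‖A‖ ^ 2 * B + (K * ‖A‖ ^ 2 * B ^ 2 + K ^ 2 * ‖A‖ + K ^ 2 * ‖A‖ ^ 2 * B) + 1,
    by positivity, ?_⟩
  rintro h ⟨hh₀, hh₁⟩ q p hqp Q P hQ hP rfl rfl
  have hPB : ∀ t ∈ Icc 0 h, ‖P t‖ ≤ B := fun t ht => by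
    have := norm_flow_momentum_sub_le hg_bd hP t ht
    nlinarith [norm_sub_norm_le (P t) (P 0), norm_nonneg (Q 0), ht.2]
  rw [verlet_eq_verletStep, norm_prod_le_iff]
  constructor
  · refine (norm_verletStep_fst_sub_le hK hh₀.le hg_lip hQ hP hPB).trans ?_
    exact mul_le_mul_of_nonneg_right (by linarith) (by positivity)
  · refine (norm_verletStep_snd_sub_le hK hh₀.le (by linarith) hg_bd hg_lip hH hH_bd
      (norm_hessian_sub_le hU hD3) hQ hP hPB).trans ?_
    exact mul_le_mul_of_nonneg_right (by linarith) (by positivity)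

/-- The Verlet map is second-order accurate for Hamilton's equations: the
one-step error relative to the exact flow is of order `h³`. -/
theorem verlet_second_order_accurate
    (ν : ℕ) (M : Matrix (Fin ν) (Fin ν) ℝ) (hM : M.PosDef)
    (U : (Fin ν → ℝ) → ℝ) (hU : ContDiff ℝ 3 U)
    (K : ℝ) (hK : 0 < K)
    (hD1 : ∀ q, ‖iteratedFDeriv ℝ 1 U q‖ ≤ K)
    (hD2 : ∀ q, ‖iteratedFDeriv ℝ 2 U q‖ ≤ K)
    (hD3 : ∀ q, ‖iteratedFDeriv ℝ 3 U q‖ ≤ K) :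
    ∀ ρ : ℝ, 0 < ρ → ∃ C : ℝ, 0 < C ∧
      ∀ h ∈ Set.Ioc (0 : ℝ) 1, ∀ q p : Fin ν → ℝ, ‖q‖ + ‖p‖ ≤ ρ →
        ∀ Q P : ℝ → (Fin ν → ℝ),
          (∀ t ∈ Set.Icc (0 : ℝ) h, HasDerivAt Q ((M⁻¹).mulVec (P t)) t) →
          (∀ t ∈ Set.Icc (0 : ℝ) h, HasDerivAt P (-(grad U (Q t))) t) →
          Q 0 = q → P 0 = p →
          ‖verlet h M U (q, p) - (Q h, P h)‖ ≤ C * h ^ 3 :=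
  verlet_second_order_accurate_general ν M U hU K hD1 hD2 hD3
end
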